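/- Let (x(·), λ(·)) be a trajectory of the algorithm and let (x*, λ*) satisfy the optimality conditions. Then for almost every t ≥ 0, the real function t ↦ V₁*(x(t), λ(t)) is differentiable at t and its derivative satisfies d/dt V₁*(x(t), λ(t)) ≤ −α ⟨x(t), L x(t)⟩ ≤ 0. -/

import Mathlib

open Matrix MeasureTheory Filter

noncomputable section

variable {E : Type*} [NormedAddCommGroup E] [InnerProductSpace ℝ E]

/-- Subdifferential of a real-valued function. -/
def subdiff (h : E → ℝ) (x : E) : Set E :=
  {g | ∀ y, h x + (inner ℝ g (y - x) : ℝ) ≤ h y}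

/-- Normal cone of a set `K` at `x`. -/
def normalCone (K : Set E) (x : E) : Set E :=
  {d | ∀ y ∈ K, (inner ℝ d (y - x) : ℝ) ≤ 0}

/-- Tangent cone of a set `K` at `x`. -/
def tangentCone (K : Set E) (x : E) : Set E :=
  closure {d | ∃ t : ℝ, 0 < t ∧ x + t • d ∈ K}

/-- `p` is the metric projection of `u` onto `K`. -/
def IsProjOn (K : Set E) (u p : E) : Prop :=
  p ∈ K ∧ ∀ v ∈ K, ‖u - p‖ ≤ ‖u - v‖

/-- Local absolute continuity on `[0, ∞)`. -/
def LocAC {F : Type*} [NormedAddCommGroup F] [NormedSpace ℝ F] [CompleteSpace F]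
    (φ : ℝ → F) : Prop :=
  (∀ᵐ t ∂(volume.restrict (Set.Ici (0:ℝ))), DifferentiableAt ℝ φ t) ∧
  LocallyIntegrableOn (deriv φ) (Set.Ici 0) volume ∧
  ∀ s t : ℝ, 0 ≤ s → s ≤ t → φ t - φ s = ∫ τ in s..t, deriv φ τ

/-- Weighted Laplacian matrix. -/
def lap (n : ℕ) (a : Fin n → Fin n → ℝ) : Matrix (Fin n) (Fin n) ℝ :=
  Matrix.of fun i j => if i = j then ∑ k ∈ Finset.univ.erase i, a i k else - a i j

/-- `L = Lₙ ⊗ I_q`. -/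
def bigL (n q : ℕ) (a : Fin n → Fin n → ℝ) :
    Matrix (Fin n × Fin q) (Fin n × Fin q) ℝ :=
  Matrix.kroneckerMap (· * ·) (lap n a) (1 : Matrix (Fin q) (Fin q) ℝ)

/-- `L` as a linear map on Euclidean space. -/
def Lmap (n q : ℕ) (a : Fin n → Fin n → ℝ) :
    EuclideanSpace ℝ (Fin n × Fin q) →ₗ[ℝ] EuclideanSpace ℝ (Fin n × Fin q) :=
  Matrix.toEuclideanLin (bigL n q a)

/-- `i`-th block of a stacked vector. -/
def blk {n q : ℕ} (x : EuclideanSpace ℝ (Fin n × Fin q)) (i : Fin n) :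
    EuclideanSpace ℝ (Fin q) := WithLp.toLp 2 (fun j => x (i, j))

/-- The product constraint set `Ω = Ω₁ × ⋯ × Ωₙ`. -/
def prodSet (n q : ℕ) (Ω : Fin n → Set (EuclideanSpace ℝ (Fin q))) :
    Set (EuclideanSpace ℝ (Fin n × Fin q)) :=
  {x | ∀ i, blk x i ∈ Ω i}

/-- `𝐟(𝐱) = ∑ᵢ fⁱ(xᵢ)`. -/
def bigF (n q : ℕ) (f : Fin n → EuclideanSpace ℝ (Fin q) → ℝ)
    (x : EuclideanSpace ℝ (Fin n × Fin q)) : ℝ :=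
  ∑ i, f i (blk x i)

/-- `1ₙ ⊗ v`. -/
def oneTensor (n q : ℕ) (v : EuclideanSpace ℝ (Fin q)) :
    EuclideanSpace ℝ (Fin n × Fin q) := WithLp.toLp 2 (fun p : Fin n × Fin q => v p.2)


/-- `V₁*(𝐱, λ) = ½‖𝐱 − x*‖² + ½‖λ − λ*‖²`. -/
def V1aux (xs lams u v : E) : ℝ :=
  (1/2) * ‖u - xs‖^2 + (1/2) * ‖v - lams‖^2

/-- `V₂*(𝐱, λ) = 𝐟(𝐱) − 𝐟(x*) + (α/2)⟨𝐱, L𝐱⟩ + α⟨𝐱, Lλ⟩`. -/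
def V2aux (n q : ℕ) (α : ℝ) (a : Fin n → Fin n → ℝ)
    (f : Fin n → EuclideanSpace ℝ (Fin q) → ℝ)
    (xs u v : EuclideanSpace ℝ (Fin n × Fin q)) : ℝ :=
  bigF n q f u - bigF n q f xs + (α/2) * (inner ℝ u (Lmap n q a u) : ℝ) +
    α * (inner ℝ u (Lmap n q a v) : ℝ)

/-!
Along a trajectory, `d/dt V₁* = ⟪x - x*, ẋ⟫ + ⟪λ - λ*, α L x⟫`. Since `ẋ` is the projection of
`u = -αLx - αLλ - g` onto the tangent cone of `Ω` at `x`, the residual `u - ẋ` lies in the normal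
cone of `Ω` at `x`, so `⟪x - x*, ẋ⟫ ≤ ⟪x - x*, u⟫`. Using `L x* = 0` and the symmetry of `L`, the
terms in `λ` cancel, and what remains besides `-α⟪x, Lx⟫` is
`-⟪g - g*, x - x*⟫ + ⟪-g* - αLλ*, x - x*⟫`, which is `≤ 0` by monotonicity of the subdifferential
and the normal-cone optimality condition at `x*`. Finally `⟪x, Lx⟫ ≥ 0` because the weighted
Laplacian form is `½ ∑ᵢⱼ aᵢⱼ (yᵢ - yⱼ)²`.
-/

open scoped RealInnerProductSpace

lemma IsProjOn.inner_sub_le_zero {K : Set E} (hK : Convex ℝ K) {u p w : E}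
    (h : IsProjOn K u p) (hw : w ∈ K) : ⟪u - p, w - p⟫ ≤ 0 := by
  obtain ⟨hp, hmin⟩ := h
  have : Nonempty K := ⟨⟨p, hp⟩⟩
  refine (norm_eq_iInf_iff_real_inner_le_zero hK hp).mp ?_ w hw
  have hbdd : BddBelow (Set.range fun v : K => ‖u - v‖) := ⟨0, by rintro _ ⟨v, rfl⟩; positivity⟩
  exact le_antisymm (le_ciInf fun v => hmin v v.2) (ciInf_le hbdd ⟨p, hp⟩)

lemma sub_mem_tangentCone {K : Set E} {x y : E} (hy : y ∈ K) : y - x ∈ tangentCone K x :=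
  subset_closure ⟨1, one_pos, by simpa using hy⟩

lemma smul_mem_tangentCone {K : Set E} {x d : E} {c : ℝ} (hc : 0 < c)
    (hd : d ∈ tangentCone K x) : c • d ∈ tangentCone K x := by
  refine map_mem_closure (continuous_const_smul c) hd ?_
  rintro d ⟨t, ht, hd⟩
  exact ⟨t / c, by positivity, by rwa [smul_smul, div_mul_cancel₀ t hc.ne']⟩

lemma convex_tangentCone {K : Set E} (hK : Convex ℝ K) {x : E} (hx : x ∈ K) :
    Convex ℝ (tangentCone K x) := by
  refine Convex.closure ?_
  rintro d₁ ⟨t₁, ht₁, hd₁⟩ d₂ ⟨t₂, ht₂, hd₂⟩ θ₁ θ₂ hθ₁ hθ₂ hθ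
  have shorten : ∀ {d : E} {s t : ℝ}, 0 < s → s ≤ t → x + t • d ∈ K → x + s • d ∈ K := by
    intro d s t hs hst hd
    have ht : 0 < t := hs.trans_le hst
    have hx' : (1 - s / t) • x + (s / t) • (x + t • d) = x + s • d := by
      rw [smul_add, smul_smul, div_mul_cancel₀ s ht.ne']
      module
    rw [← hx']
    exact hK hx hd (by rw [sub_nonneg]; exact div_le_one_of_le₀ hst ht.le) (by positivity)
      (by ring)
  set t := min t₁ t₂
  have ht : 0 < t := lt_min ht₁ ht₂
  refine ⟨t, ht, ?_⟩
  have hcomb : θ₁ • (x + t • d₁) + θ₂ • (x + t • d₂) = x + t • (θ₁ • d₁ + θ₂ • d₂) := by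
    rw [← sub_eq_of_eq_add' hθ.symm]
    module
  rw [← hcomb]
  exact hK (shorten ht (min_le_left _ _) hd₁) (shorten ht (min_le_right _ _) hd₂) hθ₁ hθ₂ hθ

lemma IsProjOn.sub_mem_normalCone {K : Set E} (hK : Convex ℝ K) {x u p : E} (hx : x ∈ K)
    (h : IsProjOn (tangentCone K x) u p) : u - p ∈ normalCone K x := by
  intro y hy
  have hT := convex_tangentCone hK hx
  -- testing against `2 • p` shows `⟪u - p, p⟫ ≤ 0`, as the tangent cone is a cone
  have h₁ := h.inner_sub_le_zero hT (smul_mem_tangentCone two_pos h.1)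
  have h₂ := h.inner_sub_le_zero hT (sub_mem_tangentCone (x := x) hy)
  rw [two_smul, add_sub_cancel_right] at h₁
  have : y - x = (y - x - p) + p := by abel
  rw [this, inner_add_right]
  linarith

lemma inner_sub_nonneg_of_mem_subdiff {h : E → ℝ} {x y g g' : E} (hg : g ∈ subdiff h x)
    (hg' : g' ∈ subdiff h y) : 0 ≤ ⟪g - g', x - y⟫ := by
  have h₁ := hg y
  have h₂ := hg' x
  rw [← neg_sub x y, inner_neg_right] at h₁
  rw [inner_sub_left]
  linarith

lemma hasDerivAt_V1aux {xs lams : E} {x lam : ℝ → E} {x' lam' : E} {t : ℝ}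
    (hx : HasDerivAt x x' t) (hlam : HasDerivAt lam lam' t) :
    HasDerivAt (fun τ => V1aux xs lams (x τ) (lam τ))
      (⟪x t - xs, x'⟫ + ⟪lam t - lams, lam'⟫) t :=
  (((hx.sub_const xs).norm_sq.const_mul (1 / 2)).add
    ((hlam.sub_const lams).norm_sq.const_mul (1 / 2))).congr_deriv (by ring)

lemma inner_sub_add_inner_sub_le {K : Set E} (hK : Convex ℝ K) {F : E → ℝ}
    {L : E →ₗ[ℝ] E} (hL : L.IsSymmetric) (α : ℝ) {X Λ P g xs lams gs : E} (hX : X ∈ K)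
    (hg : g ∈ subdiff F X) (hP : IsProjOn (tangentCone K X) (-(α • L X) - α • L Λ - g) P)
    (hxs : xs ∈ K) (hLxs : L xs = 0) (hgs : gs ∈ subdiff F xs)
    (hnc : -gs - α • L lams ∈ normalCone K xs) :
    ⟪X - xs, P⟫ + ⟪Λ - lams, α • L X⟫ ≤ -(α * ⟪X, L X⟫) := by
  have hproj : ⟪X - xs, P⟫ ≤ ⟪X - xs, -(α • L X) - α • L Λ - g⟫ := by
    have h := hP.sub_mem_normalCone hK hX xs hxs
    rw [← neg_sub X xs, inner_neg_right, inner_sub_left] at h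
    rw [real_inner_comm P, real_inner_comm (-(α • L X) - α • L Λ - g)]
    linarith
  have hxs_perp : ∀ v, ⟪xs, L v⟫ = 0 := fun v => by rw [← hL, hLxs, inner_zero_left]
  have hu : ⟪X - xs, -(α • L X) - α • L Λ - g⟫ =
      -(α * ⟪X, L X⟫) - α * ⟪X, L Λ⟫ - ⟪g, X - xs⟫ := by
    simp only [inner_sub_right, inner_neg_right, inner_smul_right, inner_sub_left, hxs_perp,
      real_inner_comm g]
    ring
  have hdual : ⟪Λ - lams, α • L X⟫ = α * ⟪X, L Λ⟫ - α * ⟪L lams, X - xs⟫ := by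
    have hΛ : ⟪Λ, L X⟫ = ⟪X, L Λ⟫ := by rw [← hL, real_inner_comm]
    have hlams : ⟪lams, L X⟫ = ⟪L lams, X⟫ - ⟪L lams, xs⟫ := by
      rw [hL, hL lams xs, hLxs, inner_zero_right, sub_zero]
    rw [inner_smul_right, inner_sub_left, inner_sub_right]
    linear_combination α * hΛ - α * hlams
  have hopt : -⟪gs, X - xs⟫ - α * ⟪L lams, X - xs⟫ ≤ 0 := by
    simpa only [inner_sub_left, inner_neg_left, inner_smul_left, RCLike.conj_to_real] using
      hnc X hX
  have hmono := inner_sub_nonneg_of_mem_subdiff hg hgs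
  rw [inner_sub_left] at hmono
  linarith

section Laplacian

variable {n : ℕ} {a : Fin n → Fin n → ℝ}

lemma lap_apply (hdiag : ∀ i, a i i = 0) (i k : Fin n) :
    lap n a i k = (if i = k then ∑ j, a i j else 0) - a i k := by
  rcases eq_or_ne i k with rfl | hik
  · rw [← Finset.add_sum_erase _ _ (Finset.mem_univ i)]
    simp [lap, hdiag]
  · simp [lap, hik]

lemma lap_isHermitian (hsymm : ∀ i j, a i j = a j i) : (lap n a).IsHermitian := by
  ext i k
  rcases eq_or_ne i k with rfl | hik
  · rfl
  · simp [lap, hik, hik.symm, hsymm i k]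

lemma lap_posSemidef (hsymm : ∀ i j, a i j = a j i) (hnn : ∀ i j, 0 ≤ a i j)
    (hdiag : ∀ i, a i i = 0) : (lap n a).PosSemidef := by
  rw [posSemidef_iff_dotProduct_mulVec]
  refine ⟨lap_isHermitian hsymm, fun y => ?_⟩
  have hform : star y ⬝ᵥ (lap n a *ᵥ y) =
      ∑ i, ∑ k, a i k * y i ^ 2 - ∑ i, ∑ k, a i k * (y i * y k) := by
    simp only [star_trivial, dotProduct, mulVec, lap_apply hdiag, sub_mul, ite_mul, zero_mul,
      Finset.sum_sub_distrib, Finset.sum_ite_eq, Finset.mem_univ, if_true, Finset.mul_sum,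
      Finset.sum_mul, mul_sub]
    congr 1 <;>
      exact Finset.sum_congr rfl fun i _ => Finset.sum_congr rfl fun k _ => by ring
  have hswap : ∑ i, ∑ k, a i k * y k ^ 2 = ∑ i, ∑ k, a i k * y i ^ 2 := by
    rw [Finset.sum_comm]
    exact Finset.sum_congr rfl fun i _ => Finset.sum_congr rfl fun k _ => by rw [hsymm]
  have hexpand : ∑ i, ∑ k, a i k * (y i - y k) ^ 2 = ∑ i, ∑ k, a i k * y i ^ 2 +
      ∑ i, ∑ k, a i k * y k ^ 2 - 2 * ∑ i, ∑ k, a i k * (y i * y k) := by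
    simp only [Finset.mul_sum, ← Finset.sum_add_distrib, ← Finset.sum_sub_distrib]
    exact Finset.sum_congr rfl fun i _ => Finset.sum_congr rfl fun k _ => by ring
  have hsq : 2 * (star y ⬝ᵥ (lap n a *ᵥ y)) = ∑ i, ∑ k, a i k * (y i - y k) ^ 2 := by
    rw [hform, hexpand, hswap]
    ring
  have : 0 ≤ ∑ i, ∑ k, a i k * (y i - y k) ^ 2 := 
    Finset.sum_nonneg fun i _ => Finset.sum_nonneg fun k _ => mul_nonneg (hnn i k) (sq_nonneg _)
  linarith

lemma Lmap_isPositive (q : ℕ) (hsymm : ∀ i j, a i j = a j i) (hnn : ∀ i j, 0 ≤ a i j)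
    (hdiag : ∀ i, a i i = 0) : (Lmap n q a).IsPositive :=
  Matrix.isPositive_toEuclideanLin_iff.mpr ((lap_posSemidef hsymm hnn hdiag).kronecker .one)

end Laplacian

lemma convex_prodSet {n q : ℕ} {Ω : Fin n → Set (EuclideanSpace ℝ (Fin q))}
    (hΩ : ∀ i, Convex ℝ (Ω i)) : Convex ℝ (prodSet n q Ω) :=
  fun _ hu _ hv _ _ hθ₁ hθ₂ hθ i => hΩ i (hu i) (hv i) hθ₁ hθ₂ hθ

theorem stmt5_general
    (n q : ℕ) (α : ℝ) (hα : 0 < α)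
    (a : Fin n → Fin n → ℝ)
    (hsymm : ∀ i j, a i j = a j i) (hnn : ∀ i j, 0 ≤ a i j) (hdiag : ∀ i, a i i = 0)
    (f : Fin n → EuclideanSpace ℝ (Fin q) → ℝ)
    (Ω : Fin n → Set (EuclideanSpace ℝ (Fin q)))
    (hΩcv : ∀ i, Convex ℝ (Ω i))
    (x lam : ℝ → EuclideanSpace ℝ (Fin n × Fin q))
    (hxac : LocAC x) (hlamac : LocAC lam)
    (hxΩ : ∀ t : ℝ, 0 ≤ t → x t ∈ prodSet n q Ω)
    (hdyn : ∀ᵐ t ∂(volume.restrict (Set.Ici (0:ℝ))),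
      (∃ g ∈ subdiff (bigF n q f) (x t),
        IsProjOn (tangentCone (prodSet n q Ω) (x t))
          (-(α • Lmap n q a (x t)) - α • Lmap n q a (lam t) - g) (deriv x t)) ∧
      deriv lam t = α • Lmap n q a (x t))
    (xs lams : EuclideanSpace ℝ (Fin n × Fin q))
    (hxsΩ : xs ∈ prodSet n q Ω) (hLxs : Lmap n q a xs = 0)
    (hopt : ∃ gs ∈ subdiff (bigF n q f) xs,
      -gs - α • Lmap n q a lams ∈ normalCone (prodSet n q Ω) xs)
    :
    ∀ᵐ t ∂(volume.restrict (Set.Ici (0:ℝ))),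
      DifferentiableAt ℝ (fun τ => V1aux xs lams (x τ) (lam τ)) t ∧
      deriv (fun τ => V1aux xs lams (x τ) (lam τ)) t ≤
        -(α * (inner ℝ (x t) (Lmap n q a (x t)) : ℝ)) ∧
      -(α * (inner ℝ (x t) (Lmap n q a (x t)) : ℝ)) ≤ 0 := by
  obtain ⟨gs, hgs, hnc⟩ := hopt
  have hL := Lmap_isPositive q hsymm hnn hdiag
  filter_upwards [hdyn, hxac.1, hlamac.1, ae_restrict_mem measurableSet_Ici]
    with t ⟨⟨g, hg, hP⟩, hlam'⟩ hx hlam ht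
  have hV := hasDerivAt_V1aux (xs := xs) (lams := lams) hx.hasDerivAt hlam.hasDerivAt
  refine ⟨hV.differentiableAt, ?_, neg_nonpos.mpr (mul_nonneg hα.le (hL.inner_nonneg_right _))⟩
  rw [hV.deriv, hlam']
  exact inner_sub_add_inner_sub_le (convex_prodSet hΩcv) hL.isSymmetric α (hxΩ t ht) hg hP
    hxsΩ hLxs hgs hnc

/-- along a trajectory, d/dt V₁*(x(t), λ(t)) ≤ −α⟨x(t), Lx(t)⟩ ≤ 0 a.e. -/
theorem stmt5
    (n q : ℕ) (hn : 2 ≤ n) (hq : 1 ≤ q) (α : ℝ) (hα : 0 < α)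
    (a : Fin n → Fin n → ℝ)
    (hsymm : ∀ i j, a i j = a j i) (hnn : ∀ i j, 0 ≤ a i j) (hdiag : ∀ i, a i i = 0)
    (hconn : (SimpleGraph.fromRel fun i j => 0 < a i j).Connected)
    (f : Fin n → EuclideanSpace ℝ (Fin q) → ℝ)
    (hfconv : ∀ i, ConvexOn ℝ Set.univ (f i)) (hfcont : ∀ i, Continuous (f i))
    (Ω : Fin n → Set (EuclideanSpace ℝ (Fin q)))
    (hΩne : ∀ i, (Ω i).Nonempty) (hΩcl : ∀ i, IsClosed (Ω i)) (hΩcv : ∀ i, Convex ℝ (Ω i))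
    (hint : (⋂ i, interior (Ω i)).Nonempty)
    (x lam : ℝ → EuclideanSpace ℝ (Fin n × Fin q))
    (hxac : LocAC x) (hlamac : LocAC lam)
    (hxΩ : ∀ t : ℝ, 0 ≤ t → x t ∈ prodSet n q Ω)
    (hdyn : ∀ᵐ t ∂(volume.restrict (Set.Ici (0:ℝ))),
      (∃ g ∈ subdiff (bigF n q f) (x t),
        IsProjOn (tangentCone (prodSet n q Ω) (x t))
          (-(α • Lmap n q a (x t)) - α • Lmap n q a (lam t) - g) (deriv x t)) ∧
      deriv lam t = α • Lmap n q a (x t))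
    (xs lams : EuclideanSpace ℝ (Fin n × Fin q))
    (hxsΩ : xs ∈ prodSet n q Ω) (hLxs : Lmap n q a xs = 0)
    (hopt : ∃ gs ∈ subdiff (bigF n q f) xs,
      -gs - α • Lmap n q a lams ∈ normalCone (prodSet n q Ω) xs)
    :
    ∀ᵐ t ∂(volume.restrict (Set.Ici (0:ℝ))),
      DifferentiableAt ℝ (fun τ => V1aux xs lams (x τ) (lam τ)) t ∧
      deriv (fun τ => V1aux xs lams (x τ) (lam τ)) t ≤
        -(α * (inner ℝ (x t) (Lmap n q a (x t)) : ℝ)) ∧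
      -(α * (inner ℝ (x t) (Lmap n q a (x t)) : ℝ)) ≤ 0 :=
  stmt5_general n q α hα a hsymm hnn hdiag f Ω hΩcv x lam hxac hlamac hxΩ hdyn xs lams hxsΩ hLxs
    hopt

end
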